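/- Associated Legendre derivative recurrence (the identity sinθ ∂_θ Y_l^m = l Q_{l+1} Y_{l+1}^m − (l+1) Q_l Y_{l−1}^m in unnormalized form): define the Legendre polynomial by Rodrigues' formula P_l(x) = (1/(2^l l!)) · (d/dx)^l (x² − 1)^l and the associated Legendre function by P_l^m(x) = (1 − x²)^{m/2} · (d/dx)^m P_l(x). Then for all integers l ≥ 1 and 0 ≤ m ≤ l, and all x ∈ (−1, 1), (2l+1)(1 − x²) · (d/dx) P_l^m(x) = (l+1)(l+m) P_{l−1}^m(x) − l(l − m + 1) P_{l+1}^m(x). -/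

import Mathlib

noncomputable section

/-- The Legendre polynomial, via Rodrigues' formula
`P_l(x) = (1/(2^l l!)) (d/dx)^l (x² − 1)^l`. -/
def legendreP (l : ℕ) (x : ℝ) : ℝ :=
  (1 / (2 ^ l * (Nat.factorial l : ℝ))) *
    iteratedDeriv l (fun t : ℝ => (t ^ 2 - 1) ^ l) x

/-- The associated Legendre function
`P_l^m(x) = (1 − x²)^{m/2} (d/dx)^m P_l(x)` for `x ∈ (−1,1)`. -/
def assocLegendreP (l m : ℕ) (x : ℝ) : ℝ :=
  (1 - x ^ 2) ^ ((m : ℝ) / 2) * iteratedDeriv m (legendreP l) x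

/-! The Rodrigues polynomials satisfy `P'_{l+1} = X P'_l + (l+1) P_l` and
`X P'_{l+1} = (l+1) P_{l+1} + P'_l`, both read off from
`D (X²-1)^{l+1} = 2(l+1) X (X²-1)^l`. Eliminating between them gives
`(2l+1)(1-X²) P'_l = l(l+1)(P_{l-1} - P_{l+1})` and
`(2l+1) X P'_l = (l+1) P'_{l-1} + l P'_{l+1}`. Differentiating the first identity `m` times,
with the `m`-th derivative of the second absorbing the terms that come from differentiating the
coefficients, gives
`(2l+1)((1-X²) P_l^{(m+1)} - m X P_l^{(m)}) = (l+1)(l+m) P_{l-1}^{(m)} - l(l-m+1) P_{l+1}^{(m)}`.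
Multiplied by `(1-x²)^{m/2}`, the left side is `(2l+1)(1-x²) d/dx P_l^m(x)`. -/

open Polynomial Nat

namespace Polynomial

def legendre (l : ℕ) (K : Type*) [Field K] : K[X] :=
  C (1 / (2 ^ l * (l ! : K))) * derivative^[l] ((X ^ 2 - 1) ^ l)

theorem derivative_X_sq_sub_one_pow_succ {R : Type*} [CommRing R] (l : ℕ) :
    derivative ((X ^ 2 - 1 : R[X]) ^ (l + 1)) = C (2 * (l + 1) : R) * (X * (X ^ 2 - 1) ^ l) := by
  rw [derivative_pow_succ]
  simp only [derivative_sub, derivative_X_pow, derivative_one, map_mul, map_add, map_ofNat,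
    map_natCast, map_one]
  push_cast
  ring

variable {K : Type*} [Field K]

theorem derivative_legendre (l : ℕ) :
    derivative (legendre l K) =
      C (1 / (2 ^ l * (l ! : K))) * derivative^[l + 1] ((X ^ 2 - 1) ^ l) := by
  rw [legendre, derivative_C_mul, Function.iterate_succ_apply']

variable (K) [CharZero K]

theorem one_div_two_pow_mul_factorial_succ_mul (l : ℕ) :
    1 / (2 ^ (l + 1) * ((l + 1) ! : K)) * (2 * (l + 1)) = 1 / (2 ^ l * (l ! : K)) := by
  rw [factorial_succ]
  push_cast
  field_simp
  ring

theorem legendre_succ (l : ℕ) :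
    legendre (l + 1) K = C (1 / (2 ^ l * (l ! : K))) * derivative^[l] (X * (X ^ 2 - 1) ^ l) := by
  rw [legendre, Function.iterate_succ_apply, derivative_X_sq_sub_one_pow_succ,
    iterate_derivative_C_mul, ← mul_assoc, ← C_mul, one_div_two_pow_mul_factorial_succ_mul]

theorem derivative_legendre_succ (l : ℕ) :
    derivative (legendre (l + 1) K) =
      X * derivative (legendre l K) + ((l : K[X]) + 1) * legendre l K := by
  rw [legendre_succ, derivative_C_mul, ← Function.iterate_succ_apply' derivative,
    mul_comm X, iterate_derivative_mul_X, derivative_legendre, legendre]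
  simp only [nsmul_eq_mul, succ_eq_add_one, add_tsub_cancel_right]
  push_cast
  ring

theorem X_mul_derivative_legendre_succ (l : ℕ) :
    X * derivative (legendre (l + 1) K) =
      ((l : K[X]) + 1) * legendre (l + 1) K + derivative (legendre l K) := by
  have key : derivative^[l + 1] (derivative ((X ^ 2 - 1 : K[X]) ^ (l + 1)) * X) =
      derivative^[l + 1] (C (2 * (l + 1) : K) * ((X ^ 2 - 1) ^ (l + 1) + (X ^ 2 - 1) ^ l)) := by
    rw [derivative_X_sq_sub_one_pow_succ]
    ring_nf
  rw [iterate_derivative_derivative_mul_X, iterate_derivative_C_mul,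
    iterate_map_add, nsmul_eq_mul] at key
  have hc := congrArg C (one_div_two_pow_mul_factorial_succ_mul K l)
  simp only [map_mul, map_add, map_ofNat, map_natCast, map_one] at key hc
  rw [derivative_legendre, derivative_legendre, legendre]
  linear_combination (norm := (push_cast; ring1)) C (1 / (2 ^ (l + 1) * ((l + 1) ! : K))) * key +
    derivative^[l + 1] ((X ^ 2 - 1 : K[X]) ^ l) * hc

theorem X_sq_sub_one_mul_derivative_legendre (l : ℕ) :
    (X ^ 2 - 1) * derivative (legendre l K) =
      ((l : K[X]) + 1) * (legendre (l + 1) K - X * legendre l K) := by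
  linear_combination X_mul_derivative_legendre_succ K l - X * derivative_legendre_succ K l

theorem mul_one_sub_X_sq_mul_derivative_legendre_succ (l : ℕ) :
    (2 * (l : K[X]) + 3) * ((1 - X ^ 2) * derivative (legendre (l + 1) K)) =
      ((l : K[X]) + 1) * ((l : K[X]) + 2) * (legendre l K - legendre (l + 2) K) := by
  linear_combination (norm := (push_cast; ring1))
    -((l : K[X]) + 2) * ((X ^ 2 - 1) * derivative_legendre_succ K l +
      X * X_sq_sub_one_mul_derivative_legendre K l) -
    ((l : K[X]) + 1) * X_sq_sub_one_mul_derivative_legendre K (l + 1)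

theorem mul_X_mul_derivative_legendre_succ (l : ℕ) :
    (2 * (l : K[X]) + 3) * (X * derivative (legendre (l + 1) K)) =
      ((l : K[X]) + 2) * derivative (legendre l K) +
        ((l : K[X]) + 1) * derivative (legendre (l + 2) K) := by
  linear_combination (norm := (push_cast; ring1))
    ((l : K[X]) + 2) * X_mul_derivative_legendre_succ K l -
      ((l : K[X]) + 1) * derivative_legendre_succ K (l + 1)

theorem mul_X_mul_iterate_derivative_legendre_succ (l m : ℕ) :
    (2 * (l : K[X]) + 3) * (X * derivative^[m + 1] (legendre (l + 1) K) +
        (m : K[X]) * derivative^[m] (legendre (l + 1) K)) =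
      ((l : K[X]) + 2) * derivative^[m + 1] (legendre l K) +
        ((l : K[X]) + 1) * derivative^[m + 1] (legendre (l + 2) K) := by
  induction m with
  | zero => simpa using mul_X_mul_derivative_legendre_succ K l
  | succ m ih =>
    have h := congrArg derivative ih
    simp only [derivative_mul, derivative_add, derivative_natCast, derivative_ofNat,
      derivative_one, derivative_X, ← Function.iterate_succ_apply' derivative] at h
    linear_combination (norm := (push_cast; ring1)) h

theorem mul_one_sub_X_sq_mul_iterate_derivative_legendre_succ (l m : ℕ) :
    (2 * (l : K[X]) + 3) * ((1 - X ^ 2) * derivative^[m + 1] (legendre (l + 1) K) -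
        (m : K[X]) * X * derivative^[m] (legendre (l + 1) K)) =
      ((l : K[X]) + 2) * ((l : K[X]) + 1 + (m : K[X])) * derivative^[m] (legendre l K) -
        ((l : K[X]) + 1) * ((l : K[X]) + 2 - (m : K[X])) * derivative^[m] (legendre (l + 2) K) := by
  induction m with
  | zero =>
    simp only [zero_add, Function.iterate_one, Function.iterate_zero_apply, Nat.cast_zero]
    linear_combination mul_one_sub_X_sq_mul_derivative_legendre_succ K l
  | succ m ih =>
    have h := congrArg derivative ih
    simp only [derivative_mul, derivative_add, derivative_sub, derivative_natCast,
      derivative_ofNat, derivative_one, derivative_X, derivative_X_pow, map_natCast,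
      ← Function.iterate_succ_apply' derivative] at h
    linear_combination (norm := (push_cast; ring1))
      h + mul_X_mul_iterate_derivative_legendre_succ K l m

end Polynomial

theorem Polynomial.iteratedDeriv_eval {𝕜 : Type*} [NontriviallyNormedField 𝕜] (p : 𝕜[X])
    (n : ℕ) :
    iteratedDeriv n (fun x => p.eval x) = fun x => (derivative^[n] p).eval x := by
  induction n with
  | zero => simp
  | succ n ih =>
    funext x
    rw [iteratedDeriv_succ, ih, Polynomial.deriv, Function.iterate_succ_apply']

theorem one_sub_sq_mul_deriv_one_sub_sq_rpow_mul {f : ℝ → ℝ} {f' x : ℝ} (a : ℝ)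
    (hf : HasDerivAt f f' x) (hx : x ∈ Set.Ioo (-1 : ℝ) 1) :
    (1 - x ^ 2) * deriv (fun y => (1 - y ^ 2) ^ a * f y) x =
      (1 - x ^ 2) ^ a * ((1 - x ^ 2) * f' - 2 * a * x * f x) := by
  have hpos : 0 < 1 - x ^ 2 := by nlinarith [hx.1, hx.2]
  have hw : HasDerivAt (fun y => 1 - y ^ 2) (-(2 * x)) x := by
    simpa using (hasDerivAt_pow 2 x).const_sub 1
  have hd : HasDerivAt (fun y => (1 - y ^ 2) ^ a * f y)
      (-(2 * x) * a * (1 - x ^ 2) ^ (a - 1) * f x + (1 - x ^ 2) ^ a * f') x :=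
    (hw.rpow_const (p := a) (Or.inl hpos.ne')).mul hf
  rw [hd.deriv]
  have hrpow : (1 - x ^ 2) * (1 - x ^ 2) ^ (a - 1) = (1 - x ^ 2) ^ a := by
    rw [Real.rpow_sub hpos, Real.rpow_one, mul_div_cancel₀ _ hpos.ne']
  linear_combination (-(2 * a * x * f x)) * hrpow

theorem legendreP_eq_eval (l : ℕ) : legendreP l = fun x => (legendre l ℝ).eval x := by
  have hpow : (fun t : ℝ => (t ^ 2 - 1) ^ l) = fun t => ((X ^ 2 - 1 : ℝ[X]) ^ l).eval t := by
    simp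
  funext x
  rw [legendreP, hpow, iteratedDeriv_eval, legendre, eval_mul, eval_C]

theorem assocLegendreP_eq_eval (l m : ℕ) :
    assocLegendreP l m =
      fun x => (1 - x ^ 2) ^ ((m : ℝ) / 2) * (derivative^[m] (legendre l ℝ)).eval x := by
  funext x
  rw [assocLegendreP, legendreP_eq_eval, iteratedDeriv_eval]

theorem assocLegendre_derivative_recurrence_general (l m : ℕ) (hl : 1 ≤ l) :
    ∀ x ∈ Set.Ioo (-1 : ℝ) 1,
      (2 * (l : ℝ) + 1) * (1 - x ^ 2) * deriv (assocLegendreP l m) x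
        = ((l : ℝ) + 1) * ((l : ℝ) + (m : ℝ)) * assocLegendreP (l - 1) m x
          - (l : ℝ) * ((l : ℝ) - (m : ℝ) + 1) * assocLegendreP (l + 1) m x := by
  obtain ⟨k, rfl⟩ : ∃ k, l = k + 1 := ⟨l - 1, by omega⟩
  intro x hx
  have hP : HasDerivAt (fun y => (derivative^[m] (legendre (k + 1) ℝ)).eval y)
      ((derivative^[m + 1] (legendre (k + 1) ℝ)).eval x) x := by
    rw [Function.iterate_succ_apply']
    exact Polynomial.hasDerivAt _ x
  have key := congrArg (eval x) (mul_one_sub_X_sq_mul_iterate_derivative_legendre_succ ℝ k m)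
  simp only [eval_mul, eval_add, eval_sub, eval_pow, eval_one, eval_X, eval_natCast,
    eval_ofNat] at key
  rw [mul_assoc, assocLegendreP_eq_eval, one_sub_sq_mul_deriv_one_sub_sq_rpow_mul _ hP hx]
  simp only [assocLegendreP_eq_eval, add_tsub_cancel_right]
  push_cast
  linear_combination (1 - x ^ 2) ^ ((m : ℝ) / 2) * key

/-- Associated Legendre derivative recurrence (the identity
`sinθ ∂_θ Y_l^m = l Q_{l+1} Y_{l+1}^m − (l+1) Q_l Y_{l−1}^m` in
unnormalized form): for all integers `l ≥ 1`, `0 ≤ m ≤ l` and all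
`x ∈ (−1,1)`,
`(2l+1)(1−x²) (d/dx)P_l^m(x) = (l+1)(l+m) P_{l−1}^m(x) − l(l−m+1) P_{l+1}^m(x)`. -/
theorem assocLegendre_derivative_recurrence (l m : ℕ) (hl : 1 ≤ l)
    (hm : m ≤ l) :
    ∀ x ∈ Set.Ioo (-1 : ℝ) 1,
      (2 * (l : ℝ) + 1) * (1 - x ^ 2) * deriv (assocLegendreP l m) x
        = ((l : ℝ) + 1) * ((l : ℝ) + (m : ℝ)) * assocLegendreP (l - 1) m x
          - (l : ℝ) * ((l : ℝ) - (m : ℝ) + 1) * assocLegendreP (l + 1) m x :=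
  assocLegendre_derivative_recurrence_general l m hl
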